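/- arXiv:2002.12840 — 2 statements merged into one kernel-verified Lean document; each statement's English description precedes it below -/
import Mathlib

section
/- Define, for s ∈ {0,…,T}, F(s) := E^λ_y[|X_{σ(τ* ∧ s)} − Y_{τ* ∧ s}|], where σ(τ) := ρ^{Root} ∧ (T − τ) for a {0,…,T}-valued stopping time τ of Y. Then F is constant on {0,…,T}. -/
open MeasureTheory ProbabilityTheory

noncomputable section

namespace SwitchingIdentities

variable {Ω : Type*} [MeasurableSpace Ω]

/-- The increment `ξ` has the fair `±1` law. -/
def FairSign (P : Measure Ω) (ξ : Ω → ℤ) : Prop :=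
  P {ω | ξ ω = 1} = 1 / 2 ∧ P {ω | ξ ω = -1} = 1 / 2

/-- `ξ` and `η` are the increment families of two independent simple symmetric random
walks on `ℤ`: all increments are measurable, fair `±1` coins, and the whole family
`(ξ₀, ξ₁, …, η₀, η₁, …)` is independent. -/
def IndepSSRWIncrements (P : Measure Ω) (ξ η : ℕ → Ω → ℤ) : Prop :=
  (∀ n, Measurable (ξ n)) ∧ (∀ n, Measurable (η n)) ∧
  (∀ n, FairSign P (ξ n)) ∧ (∀ n, FairSign P (η n)) ∧
  iIndepFun (Sum.elim ξ η) P

/-- The random walk with increments `ξ` started at `x`. -/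
def walk (ξ : ℕ → Ω → ℤ) (x : ℤ) (t : ℕ) (ω : Ω) : ℤ :=
  x + ∑ i ∈ Finset.range t, ξ i ω

/-- A Root continuation set: if `(t,m) ∈ D` then `(s,m) ∈ D` for all `s < t`. -/
def IsRootCont {α : Type*} (D : Set (ℕ × α)) : Prop :=
  ∀ t m, (t, m) ∈ D → ∀ s, s < t → (s, m) ∈ D

/-- A Rost continuation set: if `(t,m) ∈ D` then `(s,m) ∈ D` for all `s > t`. -/
def IsRostCont {α : Type*} (D : Set (ℕ × α)) : Prop :=
  ∀ t m, (t, m) ∈ D → ∀ s, t < s → (s, m) ∈ D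

/-- `hit D Z ω = inf {t : (t, Z_t) ∉ D}` (junk value `0` if the walk never leaves `D`). -/
def hit {α : Type*} (D : Set (ℕ × α)) (Z : ℕ → Ω → α) (ω : Ω) : ℕ :=
  sInf {t | (t, Z t ω) ∉ D}

/-- `hitBy D Z n ω = inf {t : (t, Z_t) ∉ D} ∧ n` (equal to `n` if the walk never leaves `D`). -/
def hitBy {α : Type*} (D : Set (ℕ × α)) (Z : ℕ → Ω → α) (n : ℕ) (ω : Ω) : ℕ :=
  sInf ({t | (t, Z t ω) ∉ D} ∪ {n})

/-- `revHitBy D Z T ω = inf {t : (T − t, Z_t) ∉ D} ∧ T`, the exit time of the time-reversed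
space-time walk, capped at `T`. -/
def revHitBy {α : Type*} (D : Set (ℕ × α)) (Z : ℕ → Ω → α) (T : ℕ) (ω : Ω) : ℕ :=
  sInf ({t | (T - t, Z t ω) ∉ D} ∪ {T})

/-- The potential function `U_m(z) = −∑_x |z − x| m({x})` of a measure `m` on `ℤ`. -/
def potential (m : Measure ℤ) (z : ℤ) : ℝ :=
  -∑' w : ℤ, (|z - w| : ℤ) * (m {w}).toReal

/-- A measure on `ℤ` has a finite first moment. -/
def FiniteFirstMoment (m : Measure ℤ) : Prop :=
  Integrable (fun z : ℤ => (z : ℝ)) m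

/-- `τ` is a stopping time of the natural filtration of the process `Z`:
`{τ ≤ n} ∈ σ(Z_0, …, Z_n)` for every `n`. -/
def IsNatStopping {α : Type*} [MeasurableSpace α] (Z : ℕ → Ω → α) (τ : Ω → ℕ) : Prop :=
  ∀ n : ℕ,
    MeasurableSet[MeasurableSpace.comap (fun ω => (fun i : Fin (n + 1) => Z i ω)) inferInstance]
      {ω | τ ω ≤ n}

/-- The law `μ^{Root}` of `X_{ρ^{Root}}` where `X` has increments `ξ` and `X_0 ∼ λ`. -/
def muRoot (P : Measure Ω) (ξ : ℕ → Ω → ℤ) (D : Set (ℕ × ℤ)) (lam : Measure ℤ) : Measure ℤ :=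
  Measure.map (fun p : ℤ × Ω => walk ξ p.1 (hit D (walk ξ p.1) p.2) p.2) (lam.prod P)

/-- The law `μ^{Root}_T` of `X_{ρ^{Root} ∧ T}` where `X` has increments `ξ` and `X_0 ∼ λ`. -/
def muRootT (P : Measure Ω) (ξ : ℕ → Ω → ℤ) (D : Set (ℕ × ℤ)) (lam : Measure ℤ) (T : ℕ) :
    Measure ℤ :=
  Measure.map (fun p : ℤ × Ω => walk ξ p.1 (hitBy D (walk ξ p.1) T p.2) p.2) (lam.prod P)

/-!
It suffices to show `F (s + 1) = F s` for `s < T`. The two integrands differ only on the event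
`s < τ*`, which is decided by `η₀, …, η_{s-1}`. With `n = T - s - 1` and
`a = X_{ρ ∧ n} - Y_s`, on that event the integrand of `F (s + 1)` is `|a - η_s|`, while that
of `F s` is `|a + ξ_n|` if `X` is still running at time `n` and `|a|` otherwise. Averaging
over the independent fair coin `η_s` (resp. `ξ_n`) gives `(|a - 1| + |a + 1|) / 2` in the first
case and in the running case. In the stopped case `(ρ, X_ρ) ∉ D`, while `(T - s, Y_s) ∈ D`
and `ρ ≤ n < T - s`, so the Root property puts `(ρ, Y_s)` in `D`; hence `a ≠ 0` and
`|a - 1| + |a + 1| = 2 |a|`.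

To average over a single coin, integrands are viewed as functions of the whole increment family
`Sum.elim ξ η`, i.e. of a point of `ℕ ⊕ ℕ → ℤ`, on which they depend through finitely many
coordinates.
-/

section Paths

variable {Θ : Type*} {α : Type*}

lemma walk_succ (ξ : ℕ → Θ → ℤ) (x : ℤ) (t : ℕ) (ω : Θ) :
    walk ξ x (t + 1) ω = walk ξ x t ω + ξ t ω := by
  simp only [walk, Finset.sum_range_succ, add_assoc]

lemma walk_congr {Θ' : Type*} {ξ : ℕ → Θ → ℤ} {ξ' : ℕ → Θ' → ℤ} {ω : Θ} {ω' : Θ'} {t : ℕ}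
    (x : ℤ) (h : ∀ i < t, ξ i ω = ξ' i ω') : walk ξ x t ω = walk ξ' x t ω' := by
  simp only [walk]
  exact congrArg _ (Finset.sum_congr rfl fun i hi => h i (Finset.mem_range.mp hi))

lemma abs_walk_le {ξ : ℕ → Θ → ℤ} {ω : Θ} {t : ℕ} (x : ℤ) (h : ∀ i < t, |ξ i ω| ≤ 1) :
    |walk ξ x t ω| ≤ |x| + t := by
  have hsum : |∑ i ∈ Finset.range t, ξ i ω| ≤ ∑ i ∈ Finset.range t, |ξ i ω| :=
    Finset.abs_sum_le_sum_abs _ _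
  calc |walk ξ x t ω| ≤ |x| + ∑ i ∈ Finset.range t, |ξ i ω| := by
        unfold walk; linarith [abs_add_le x (∑ i ∈ Finset.range t, ξ i ω)]
    _ ≤ |x| + ∑ _i ∈ Finset.range t, 1 := by
        gcongr with i hi; exact h i (Finset.mem_range.mp hi)
    _ = |x| + t := by simp

lemma hitBy_le (D : Set (ℕ × α)) (Z : ℕ → Θ → α) (m : ℕ) (ω : Θ) : hitBy D Z m ω ≤ m :=
  Nat.sInf_le (Or.inr rfl)

lemma lt_hitBy_iff {D : Set (ℕ × α)} {Z : ℕ → Θ → α} {m s : ℕ} {ω : Θ} :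
    s < hitBy D Z m ω ↔ s < m ∧ ∀ t ≤ s, (t, Z t ω) ∈ D := by
  constructor
  · intro hs
    refine ⟨hs.trans_le (hitBy_le D Z m ω), fun t ht => ?_⟩
    by_contra hout
    exact absurd (Nat.sInf_le (Or.inl hout)) (by omega : ¬ hitBy D Z m ω ≤ t)
  · rintro ⟨hsm, hD⟩
    by_contra! hle
    rcases Nat.sInf_mem (⟨m, Or.inr rfl⟩ : ({t | (t, Z t ω) ∉ D} ∪ {m} : Set ℕ).Nonempty)
      with hout | hcap
    · exact hout (hD _ hle)
    · exact absurd (hcap ▸ hle : m ≤ s) (by omega)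

lemma hitBy_congr {Θ' : Type*} {D : Set (ℕ × α)} {Z : ℕ → Θ → α} {Z' : ℕ → Θ' → α}
    {ω : Θ} {ω' : Θ'} {m : ℕ} (h : ∀ t < m, Z t ω = Z' t ω') :
    hitBy D Z m ω = hitBy D Z' m ω' :=
  eq_of_forall_lt_iff fun s => by
    simp only [lt_hitBy_iff]
    exact and_congr_right fun hs => forall₂_congr fun t ht => by rw [h t (by omega)]

lemma hitBy_walk_congr {Θ' : Type*} {D : Set (ℕ × ℤ)} {ξ : ℕ → Θ → ℤ} {ξ' : ℕ → Θ' → ℤ}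
    {ω : Θ} {ω' : Θ'} {m : ℕ} (x : ℤ) (h : ∀ i < m, ξ i ω = ξ' i ω') :
    hitBy D (walk ξ x) m ω = hitBy D (walk ξ' x) m ω' :=
  hitBy_congr fun t ht => walk_congr x fun i hi => h i (by omega)

lemma lt_hitBy_congr {Θ' : Type*} {D : Set (ℕ × α)} {Z : ℕ → Θ → α} {Z' : ℕ → Θ' → α}
    {ω : Θ} {ω' : Θ'} {m s : ℕ} (h : ∀ t ≤ s, Z t ω = Z' t ω') :
    s < hitBy D Z m ω ↔ s < hitBy D Z' m ω' := by
  simp only [lt_hitBy_iff]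
  exact and_congr_right fun _ => forall₂_congr fun t ht => by rw [h t ht]

lemma hitBy_succ_of_notMem {D : Set (ℕ × α)} {Z : ℕ → Θ → α} {n : ℕ} {ω : Θ}
    (h : (hitBy D Z n ω, Z (hitBy D Z n ω) ω) ∉ D) :
    hitBy D Z (n + 1) ω = hitBy D Z n ω :=
  le_antisymm (Nat.sInf_le (Or.inl h)) <| le_of_forall_lt fun s hs => by
    rw [lt_hitBy_iff] at hs ⊢
    exact ⟨by omega, hs.2⟩

lemma hitBy_succ_of_mem {D : Set (ℕ × α)} {Z : ℕ → Θ → α} {n : ℕ} {ω : Θ}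
    (h : (hitBy D Z n ω, Z (hitBy D Z n ω) ω) ∈ D) :
    hitBy D Z n ω = n ∧ hitBy D Z (n + 1) ω = n + 1 := by
  have hn : hitBy D Z n ω = n := by
    rcases Nat.sInf_mem (⟨n, Or.inr rfl⟩ : ({t | (t, Z t ω) ∉ D} ∪ {n} : Set ℕ).Nonempty)
      with hout | hcap
    · exact absurd h hout
    · exact hcap
  refine ⟨hn, le_antisymm (hitBy_le D Z _ ω) (Nat.succ_le_of_lt (lt_hitBy_iff.mpr ⟨by omega, ?_⟩))⟩
  intro t ht
  rcases ht.lt_or_eq with ht | rfl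
  · exact (lt_hitBy_iff.mp (hn ▸ ht)).2 t le_rfl
  · exact hn ▸ h

def stoppedWalk (D : Set (ℕ × ℤ)) (ξ : ℕ → Θ → ℤ) (x : ℤ) (m : ℕ) (ω : Θ) : ℤ :=
  walk ξ x (hitBy D (walk ξ x) m ω) ω

lemma stoppedWalk_congr {Θ' : Type*} {D : Set (ℕ × ℤ)} {ξ : ℕ → Θ → ℤ} {ξ' : ℕ → Θ' → ℤ}
    {ω : Θ} {ω' : Θ'} {m : ℕ} (x : ℤ) (h : ∀ i < m, ξ i ω = ξ' i ω') :
    stoppedWalk D ξ x m ω = stoppedWalk D ξ' x m ω' := by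
  rw [stoppedWalk, stoppedWalk, hitBy_walk_congr x h]
  exact walk_congr x fun i hi => h i (hi.trans_le (hitBy_le _ _ _ _))

open Classical in
lemma stoppedWalk_succ (D : Set (ℕ × ℤ)) (ξ : ℕ → Θ → ℤ) (x : ℤ) (n : ℕ) (ω : Θ) :
    stoppedWalk D ξ x (n + 1) ω = stoppedWalk D ξ x n ω +
      if (hitBy D (walk ξ x) n ω, stoppedWalk D ξ x n ω) ∈ D then ξ n ω else 0 := by
  unfold stoppedWalk
  split_ifs with h
  · obtain ⟨hn, hn'⟩ := hitBy_succ_of_mem h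
    rw [hn', hn, walk_succ]
  · rw [hitBy_succ_of_notMem h, add_zero]

lemma abs_stoppedWalk_le {D : Set (ℕ × ℤ)} {ξ : ℕ → Θ → ℤ} {ω : Θ} {m : ℕ} (x : ℤ)
    (h : ∀ i < m, |ξ i ω| ≤ 1) : |stoppedWalk D ξ x m ω| ≤ |x| + m := by
  have hle := hitBy_le D (walk ξ x) m ω
  have := abs_walk_le x fun i (hi : i < hitBy D (walk ξ x) m ω) => h i (by omega)
  unfold stoppedWalk
  omega

lemma stoppedWalk_ne_of_notMem {D : Set (ℕ × ℤ)} (hD : IsRootCont D) {ξ : ℕ → Θ → ℤ}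
    {x z : ℤ} {n : ℕ} {ω : Θ} (hz : (n + 1, z) ∈ D)
    (h : (hitBy D (walk ξ x) n ω, stoppedWalk D ξ x n ω) ∉ D) : stoppedWalk D ξ x n ω ≠ z := by
  rintro rfl
  exact h (hD _ _ hz _ (Nat.lt_succ_of_le (hitBy_le _ _ _ _)))

end Paths

section Gap

variable {Θ : Type*}

lemma revHitBy_le (D : Set (ℕ × ℤ)) (Z : ℕ → Θ → ℤ) (T : ℕ) (ω : Θ) : revHitBy D Z T ω ≤ T :=
  Nat.sInf_le (Or.inr rfl)

lemma lt_revHitBy_iff {D : Set (ℕ × ℤ)} {Z : ℕ → Θ → ℤ} {T s : ℕ} {ω : Θ} :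
    s < revHitBy D Z T ω ↔ s < T ∧ ∀ t ≤ s, (T - t, Z t ω) ∈ D :=
  lt_hitBy_iff (D := {p | (T - p.1, p.2) ∈ D})

/-- `|X_{σ(τ* ∧ s)} - Y_{τ* ∧ s}|` for `X₀ = x`, `Y₀ = y`: the integrand of `F s`. -/
def interpGap (D : Set (ℕ × ℤ)) (T : ℕ) (y : ℤ) (ξ η : ℕ → Θ → ℤ) (s : ℕ) (x : ℤ) (ω : Θ) : ℤ :=
  |stoppedWalk D ξ x (T - min (revHitBy D (walk η y) T ω) s) ω
    - walk η y (min (revHitBy D (walk η y) T ω) s) ω|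

variable {D : Set (ℕ × ℤ)} {T s : ℕ} {y : ℤ} {ξ η : ℕ → Θ → ℤ}

lemma interpGap_succ_of_revHitBy_le {x : ℤ} {ω : Θ} (h : revHitBy D (walk η y) T ω ≤ s) :
    interpGap D T y ξ η (s + 1) x ω = interpGap D T y ξ η s x ω := by
  simp only [interpGap, min_eq_left h, min_eq_left (h.trans s.le_succ)]

lemma interpGap_of_le_revHitBy {x : ℤ} {ω : Θ} (h : s ≤ revHitBy D (walk η y) T ω) :
    interpGap D T y ξ η s x ω = |stoppedWalk D ξ x (T - s) ω - walk η y s ω| := by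
  simp only [interpGap, min_eq_right h]

lemma interpGap_congr {Θ' : Type*} {ξ' η' : ℕ → Θ' → ℤ} {ω : Θ} {ω' : Θ'} (x : ℤ)
    (hξ : ∀ i < T, ξ i ω = ξ' i ω') (hη : ∀ j < T, η j ω = η' j ω') :
    interpGap D T y ξ η s x ω = interpGap D T y ξ' η' s x ω' := by
  have hτ : revHitBy D (walk η y) T ω = revHitBy D (walk η' y) T ω' :=
    hitBy_walk_congr (D := {p | (T - p.1, p.2) ∈ D}) y hη
  have hr : min (revHitBy D (walk η' y) T ω') s ≤ T := (min_le_left _ _).trans (revHitBy_le _ _ _ _)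
  rw [interpGap, interpGap, hτ, stoppedWalk_congr x fun i hi => hξ i (by omega),
    walk_congr y fun j hj => hη j (by omega)]

lemma abs_interpGap_le {ω : Θ} (x : ℤ) (hξ : ∀ i < T, |ξ i ω| ≤ 1) (hη : ∀ j < T, |η j ω| ≤ 1) :
    |interpGap D T y ξ η s x ω| ≤ |x| + |y| + 2 * T := by
  rw [interpGap, abs_abs]
  set r := min (revHitBy D (walk η y) T ω) s
  have hr : r ≤ T := (min_le_left _ _).trans (revHitBy_le _ _ _ _)
  have hX := abs_stoppedWalk_le (D := D) (m := T - r) x fun i hi => hξ i (by omega)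
  have hY := abs_walk_le y fun j (hj : j < r) => hη j (by omega)
  have := abs_sub (stoppedWalk D ξ x (T - r) ω) (walk η y r ω)
  omega

end Gap

section Canonical

open Function

/-- On the canonical space `ℕ ⊕ ℕ → ℤ` of the increment family `Sum.elim ξ η`, `X` and `Y` have
increments `leftIncr` and `rightIncr`; thus `interpGap D T y ξ η s x ω` is, by definition,
`interpGap D T y leftIncr rightIncr s x (Sum.elim ξ η · ω)`. -/
def leftIncr (i : ℕ) (w : ℕ ⊕ ℕ → ℤ) : ℤ := w (.inl i)

def rightIncr (j : ℕ) (w : ℕ ⊕ ℕ → ℤ) : ℤ := w (.inr j)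

lemma leftIncr_update_inr (i j : ℕ) (w : ℕ ⊕ ℕ → ℤ) (e : ℤ) :
    leftIncr i (update w (.inr j) e) = leftIncr i w :=
  update_of_ne Sum.inl_ne_inr _ _

lemma rightIncr_update_inl (i j : ℕ) (w : ℕ ⊕ ℕ → ℤ) (e : ℤ) :
    rightIncr j (update w (.inl i) e) = rightIncr j w :=
  update_of_ne Sum.inr_ne_inl _ _

lemma leftIncr_update_inl (i n : ℕ) (w : ℕ ⊕ ℕ → ℤ) (e : ℤ) :
    leftIncr i (update w (.inl n) e) = if i = n then e else leftIncr i w := by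
  simp [leftIncr, update_apply]

lemma rightIncr_update_inr (j s : ℕ) (w : ℕ ⊕ ℕ → ℤ) (e : ℤ) :
    rightIncr j (update w (.inr s) e) = if j = s then e else rightIncr j w := by
  simp [rightIncr, update_apply]

variable {D : Set (ℕ × ℤ)} {T s : ℕ} {y : ℤ}

lemma revHitBy_update_inl (w : ℕ ⊕ ℕ → ℤ) (i : ℕ) (e : ℤ) :
    revHitBy D (walk rightIncr y) T (update w (.inl i) e) = revHitBy D (walk rightIncr y) T w :=
  hitBy_walk_congr (D := {p | (T - p.1, p.2) ∈ D}) y fun _ _ => rightIncr_update_inl _ _ _ _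

lemma lt_revHitBy_update_inr (w : ℕ ⊕ ℕ → ℤ) (e : ℤ) :
    s < revHitBy D (walk rightIncr y) T (update w (.inr s) e) ↔
      s < revHitBy D (walk rightIncr y) T w :=
  lt_hitBy_congr (D := {p | (T - p.1, p.2) ∈ D}) fun t ht => walk_congr y fun j hj => by
    rw [rightIncr_update_inr, if_neg (by omega)]

lemma abs_sub_one_add_abs_add_one {a : ℤ} (ha : a ≠ 0) : |a - 1| + |a + 1| = 2 * |a| := by
  rcases ha.lt_or_gt with h | h
  · rw [abs_of_neg (by omega), abs_of_nonpos (by omega), abs_of_neg h]; ring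
  · rw [abs_of_nonneg (by omega), abs_of_pos (by omega), abs_of_pos h]; ring

theorem interpGap_switch (hD : IsRootCont D) (hs : s < T) (x : ℤ) (w : ℕ ⊕ ℕ → ℤ)
    (hA : s < revHitBy D (walk rightIncr y) T w) :
    interpGap D T y leftIncr rightIncr (s + 1) x (update w (.inr s) 1)
      + interpGap D T y leftIncr rightIncr (s + 1) x (update w (.inr s) (-1))
      = interpGap D T y leftIncr rightIncr s x (update w (.inl (T - (s + 1))) 1)
      + interpGap D T y leftIncr rightIncr s x (update w (.inl (T - (s + 1))) (-1)) := by
  classical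
  set n := T - (s + 1) with hn
  have hTs : T - s = n + 1 := by omega
  have hYs : ∀ e, walk rightIncr y s (update w (.inr s) e) = walk rightIncr y s w :=
    fun e => walk_congr y fun j hj => by rw [rightIncr_update_inr, if_neg hj.ne]
  have hY : ∀ e, walk rightIncr y (s + 1) (update w (.inr s) e) = walk rightIncr y s w + e :=
    fun e => by rw [walk_succ, hYs, rightIncr_update_inr, if_pos rfl]
  have hX : ∀ e, stoppedWalk D leftIncr x n (update w (.inr s) e) = stoppedWalk D leftIncr x n w :=
    fun e => stoppedWalk_congr x fun i _ => leftIncr_update_inr _ _ _ _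
  have hagree : ∀ e, ∀ i < n, leftIncr i (update w (.inl n) e) = leftIncr i w :=
    fun e i hi => by rw [leftIncr_update_inl, if_neg hi.ne]
  have hX' : ∀ e, stoppedWalk D leftIncr x (n + 1) (update w (.inl n) e) =
      stoppedWalk D leftIncr x n w +
        if (hitBy D (walk leftIncr x) n w, stoppedWalk D leftIncr x n w) ∈ D then e else 0 :=
    fun e => by
      rw [stoppedWalk_succ, stoppedWalk_congr x (hagree e), hitBy_walk_congr x (hagree e),
        leftIncr_update_inl, if_pos rfl]
  have hA₁ : ∀ e, s + 1 ≤ revHitBy D (walk rightIncr y) T (update w (.inr s) e) :=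
    fun e => (lt_revHitBy_update_inr w e).mpr hA
  have hA₂ : ∀ e, s ≤ revHitBy D (walk rightIncr y) T (update w (.inl n) e) :=
    fun e => (revHitBy_update_inl w n e).symm ▸ hA.le
  simp only [interpGap_of_le_revHitBy (hA₁ _), interpGap_of_le_revHitBy (hA₂ _), ← hn, hY, hX,
    hX', hTs, walk_congr y fun j _ => rightIncr_update_inl n j w _]
  set a := stoppedWalk D leftIncr x n w
  set b := walk rightIncr y s w
  split_ifs with hcont
  · ring_nf
  · have hb : (n + 1, b) ∈ D := hTs ▸ (lt_revHitBy_iff.mp hA).2 s le_rfl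
    have hab : a - b ≠ 0 := sub_ne_zero.mpr (stoppedWalk_ne_of_notMem hD hb hcont)
    rw [add_zero, ← two_mul, ← abs_sub_one_add_abs_add_one hab]
    ring_nf

end Canonical

section Coin

variable {P : Measure Ω}

lemma integral_ite_mul_of_indepFun {γ : Type*} [MeasurableSpace γ] [Countable γ]
    [MeasurableSingletonClass γ] [DecidableEq γ] {c : Ω → γ} {f : Ω → ℝ} (hc : Measurable c)
    (hf : AEStronglyMeasurable f P) (hind : IndepFun c f P) (e : γ) :
    ∫ ω, (if c ω = e then 1 else 0) * f ω ∂P = P.real {ω | c ω = e} * ∫ ω, f ω ∂P := by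
  have hφ : Measurable fun z : γ => if z = e then (1 : ℝ) else 0 := measurable_of_countable _
  have hprod : ∫ ω, (if c ω = e then 1 else 0) * f ω ∂P
      = (∫ ω, (if c ω = e then (1 : ℝ) else 0) ∂P) * ∫ ω, f ω ∂P :=
    (hind.comp hφ measurable_id).integral_fun_mul_eq_mul_integral
      (hφ.comp hc).aestronglyMeasurable hf
  have hmass : ∫ ω, (if c ω = e then (1 : ℝ) else 0) ∂P = P.real {ω | c ω = e} := by
    rw [← integral_indicator_one (s := {ω | c ω = e}) (hc (measurableSet_singleton e))]
    congr 1
    ext ω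
    simp [Set.indicator_apply]
  rw [hprod, hmass]

variable [IsProbabilityMeasure P]

lemma FairSign.ae_eq_one_or {c : Ω → ℤ} (hc : Measurable c) (hfair : FairSign P c) :
    ∀ᵐ ω ∂P, c ω = 1 ∨ c ω = -1 := by
  have hdisj : Disjoint {ω | c ω = 1} {ω | c ω = -1} :=
    Set.disjoint_left.mpr fun ω h₁ h₂ => by simp_all
  have hunion : P ({ω | c ω = 1} ∪ {ω | c ω = -1}) = 1 := by
    rw [measure_union hdisj (hc (measurableSet_singleton _)), hfair.1, hfair.2,
      ENNReal.add_halves]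
  exact (ae_iff_measure_eq ((hc (measurableSet_singleton _)).union
    (hc (measurableSet_singleton _))).nullMeasurableSet).mpr (by rwa [measure_univ]) |>.mono
    fun ω h => h

lemma integral_comp_fairCoin {β : Type*} [MeasurableSpace β] [Countable β]
    [MeasurableSingletonClass β] {V : Ω → β} {c : Ω → ℤ} (hc : Measurable c)
    (hfair : FairSign P c) (hind : IndepFun V c P) (g : β → ℤ → ℝ)
    (h₁ : Integrable (fun ω => g (V ω) 1) P) (h₂ : Integrable (fun ω => g (V ω) (-1)) P) :
    ∫ ω, g (V ω) (c ω) ∂P = (∫ ω, g (V ω) 1 ∂P + ∫ ω, g (V ω) (-1) ∂P) / 2 := by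
  have hsplit : ∀ᵐ ω ∂P, g (V ω) (c ω) =
      (if c ω = 1 then 1 else 0) * g (V ω) 1 + (if c ω = -1 then 1 else 0) * g (V ω) (-1) := by
    filter_upwards [hfair.ae_eq_one_or hc] with ω h
    rcases h with h | h <;> simp [h]
  have hind' : ∀ e, IndepFun c (fun ω => g (V ω) e) P := fun e =>
    hind.symm.comp measurable_id (measurable_of_countable fun a => g a e)
  have hbdd : ∀ e, ∀ᵐ ω ∂P, ‖(if c ω = e then (1 : ℝ) else 0)‖ ≤ 1 := fun e =>
    .of_forall fun ω => by split_ifs <;> simp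
  have hmeas : ∀ e, AEStronglyMeasurable (fun ω => if c ω = e then (1 : ℝ) else 0) P :=
    fun e => ((measurable_of_countable fun z : ℤ => if z = e then (1 : ℝ) else 0).comp
      hc).aestronglyMeasurable
  rw [integral_congr_ae hsplit, integral_add (h₁.bdd_mul (hmeas 1) (hbdd 1))
      (h₂.bdd_mul (hmeas (-1)) (hbdd (-1))),
    integral_ite_mul_of_indepFun hc h₁.1 (hind' 1),
    integral_ite_mul_of_indepFun hc h₂.1 (hind' (-1)),
    measureReal_def, measureReal_def, hfair.1, hfair.2]
  simp only [ENNReal.toReal_div, ENNReal.toReal_one, ENNReal.toReal_ofNat]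
  ring

end Coin

section Coordinates

open Function

variable {ι α : Type*}

lemma DependsOn.measurable [MeasurableSpace α] [Countable α]
    [MeasurableSingletonClass α] {β : Type*} [MeasurableSpace β] [Nonempty β]
    {Φ : (ι → α) → β} {S : Finset ι} (hΦ : DependsOn Φ S) : Measurable Φ := by
  obtain ⟨G, rfl⟩ := dependsOn_iff_exists_comp.mp hΦ
  exact (_root_.measurable_of_countable G).comp
    (measurable_pi_lambda _ fun i => measurable_pi_apply (i : ι))

lemma dependsOn_comp_update [DecidableEq ι] {β : Type*} {Φ : (ι → α) → β} {S : Finset ι}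
    (hΦ : DependsOn Φ S) (k : ι) (e : α) :
    DependsOn (fun w => Φ (update w k e)) (S.erase k : Set ι) :=
  fun w w' h => hΦ fun i hi => by
    rcases eq_or_ne i k with rfl | hik
    · simp
    · simp [update_of_ne hik, h i (Finset.mem_erase.mpr ⟨hik, hi⟩)]

variable {P : Measure Ω}

lemma integrable_comp_of_dependsOn [IsFiniteMeasure P] {W : ι → Ω → ℤ}
    (hW : ∀ i, Measurable (W i)) (hWb : ∀ᵐ ω ∂P, ∀ i, |W i ω| ≤ 1) {Φ : (ι → ℤ) → ℝ}
    {S : Finset ι} (hΦ : DependsOn Φ S) {C : ℝ} (hC : ∀ w : ι → ℤ, (∀ i, |w i| ≤ 1) → |Φ w| ≤ C) :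
    Integrable (fun ω => Φ (W · ω)) P :=
  .of_bound ((DependsOn.measurable hΦ).comp (measurable_pi_lambda _ hW)).aestronglyMeasurable C
    (hWb.mono fun _ h => hC _ h)

variable [IsProbabilityMeasure P]

lemma FairSign.ae_abs_le_one [Countable ι] {W : ι → Ω → ℤ} (hW : ∀ i, Measurable (W i))
    (hfair : ∀ i, FairSign P (W i)) : ∀ᵐ ω ∂P, ∀ i, |W i ω| ≤ 1 :=
  ae_all_iff.mpr fun i => ((hfair i).ae_eq_one_or (hW i)).mono fun ω h => by
    rcases h with h | h <;> simp [h]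

lemma integral_eq_avg_update [DecidableEq ι] {W : ι → Ω → ℤ} (hW : ∀ i, Measurable (W i))
    (hind : iIndepFun W P) {k : ι} (hk : FairSign P (W k)) {Φ : (ι → ℤ) → ℝ} {S : Finset ι}
    (hΦ : DependsOn Φ S) (h₁ : Integrable (fun ω => Φ (update (W · ω) k 1)) P)
    (h₂ : Integrable (fun ω => Φ (update (W · ω) k (-1))) P) :
    ∫ ω, Φ (W · ω) ∂P =
      (∫ ω, Φ (update (W · ω) k 1) ∂P + ∫ ω, Φ (update (W · ω) k (-1)) ∂P) / 2 := by
  have hdep : DependsOn (fun w e => Φ (update w k e)) (S.erase k : Set ι) :=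
    fun _ _ h => funext fun e => dependsOn_comp_update hΦ k e h
  obtain ⟨G, hG⟩ := dependsOn_iff_exists_comp.mp hdep
  have hrepr : ∀ ω e, Φ (update (W · ω) k e) = G (fun i : S.erase k => W i ω) e :=
    fun ω e => congrFun (congrFun hG _) e
  have hind' : IndepFun (fun ω (i : S.erase k) => W i ω) (W k) P := by
    exact (hind.indepFun_finset (S.erase k) {k} (by simp) hW).comp measurable_id
      (measurable_pi_apply (⟨k, Finset.mem_singleton_self k⟩ : ({k} : Finset ι)))
  simp only [hrepr] at h₁ h₂ ⊢
  rw [← integral_comp_fairCoin (hW k) hk hind' G h₁ h₂]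
  refine integral_congr_ae (.of_forall fun ω => ?_)
  simp only [← hrepr, update_eq_self]

lemma integral_eq_of_sum_update_eq [Countable ι] [DecidableEq ι] {W : ι → Ω → ℤ}
    (hW : ∀ i, Measurable (W i)) (hfair : ∀ i, FairSign P (W i)) (hind : iIndepFun W P)
    {Φ Ψ : (ι → ℤ) → ℝ} {S : Finset ι} (hΦ : DependsOn Φ S) (hΨ : DependsOn Ψ S) {C : ℝ}
    (hΦC : ∀ w : ι → ℤ, (∀ i, |w i| ≤ 1) → |Φ w| ≤ C)
    (hΨC : ∀ w : ι → ℤ, (∀ i, |w i| ≤ 1) → |Ψ w| ≤ C) {k k' : ι}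
    (hsum : ∀ w, Φ (update w k 1) + Φ (update w k (-1)) =
      Ψ (update w k' 1) + Ψ (update w k' (-1))) :
    ∫ ω, Φ (W · ω) ∂P = ∫ ω, Ψ (W · ω) ∂P := by
  have hint : ∀ {Φ : (ι → ℤ) → ℝ}, DependsOn Φ S → (∀ w : ι → ℤ, (∀ i, |w i| ≤ 1) → |Φ w| ≤ C) →
      ∀ (k : ι) (e : ℤ), |e| ≤ 1 → Integrable (fun ω => Φ (update (W · ω) k e)) P :=
    fun hΦ hΦC k e he => integrable_comp_of_dependsOn hW (FairSign.ae_abs_le_one hW hfair)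
      (dependsOn_comp_update hΦ k e) fun w hw => hΦC _ fun i => by
        rcases eq_or_ne i k with rfl | hik
        · simpa using he
        · simpa [update_of_ne hik] using hw i
  have hΦ₁ := hint hΦ hΦC k 1 (by simp)
  have hΦ₂ := hint hΦ hΦC k (-1) (by simp)
  have hΨ₁ := hint hΨ hΨC k' 1 (by simp)
  have hΨ₂ := hint hΨ hΨC k' (-1) (by simp)
  rw [integral_eq_avg_update hW hind (hfair k) hΦ hΦ₁ hΦ₂,
    integral_eq_avg_update hW hind (hfair k') hΨ hΨ₁ hΨ₂, ← integral_add hΦ₁ hΦ₂,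
    ← integral_add hΨ₁ hΨ₂]
  simp only [hsum]

end Coordinates

section Interpolation

open Finset Function

variable {D : Set (ℕ × ℤ)} {T s : ℕ} {y : ℤ}

lemma dependsOn_revHitBy :
    DependsOn (revHitBy D (walk rightIncr y) T) ((range T).disjSum (range T)) :=
  fun _ _ h => hitBy_walk_congr (D := {p | (T - p.1, p.2) ∈ D}) y fun j hj =>
    h (.inr j) (by simpa using hj)

lemma dependsOn_interpGap (x : ℤ) :
    DependsOn (interpGap D T y leftIncr rightIncr s x) ((range T).disjSum (range T)) :=
  fun _ _ h => interpGap_congr x (fun i hi => h (.inl i) (by simpa using hi))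
    fun j hj => h (.inr j) (by simpa using hj)

lemma dependsOn_indicator_interpGap {A : Set (ℕ ⊕ ℕ → ℤ)}
    (hA : DependsOn (· ∈ A) ((range T).disjSum (range T))) (t : ℕ) (x : ℤ) :
    DependsOn (A.indicator fun w => (interpGap D T y leftIncr rightIncr t x w : ℝ))
      ((range T).disjSum (range T)) := fun w w' h => by
  classical
  simp only [Set.indicator_apply, show (w ∈ A) = (w' ∈ A) from hA h, dependsOn_interpGap x h]

lemma abs_indicator_interpGap_le (A : Set (ℕ ⊕ ℕ → ℤ)) (t : ℕ) (x : ℤ) {w : ℕ ⊕ ℕ → ℤ}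
    (hw : ∀ k, |w k| ≤ 1) :
    |A.indicator (fun w => (interpGap D T y leftIncr rightIncr t x w : ℝ)) w| ≤
      |(x : ℝ)| + |(y : ℝ)| + 2 * T := by
  refine (norm_indicator_le_norm_self (s := A)
    (fun w => (interpGap D T y leftIncr rightIncr t x w : ℝ)) w).trans ?_
  have := abs_interpGap_le (D := D) (T := T) (y := y) (s := t) (ξ := leftIncr) (η := rightIncr) x
    (fun i _ => hw (.inl i)) fun j _ => hw (.inr j)
  rw [Real.norm_eq_abs]
  exact_mod_cast this

lemma indicator_interpGap_switch (hD : IsRootCont D) (hs : s < T) (x : ℤ) (w : ℕ ⊕ ℕ → ℤ) :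
    let A := {w | s < revHitBy D (walk rightIncr y) T w}
    let G := fun t w => (interpGap D T y leftIncr rightIncr t x w : ℝ)
    A.indicator (G (s + 1)) (update w (.inr s) 1) + A.indicator (G (s + 1)) (update w (.inr s) (-1))
      = A.indicator (G s) (update w (.inl (T - (s + 1))) 1)
        + A.indicator (G s) (update w (.inl (T - (s + 1))) (-1)) := by
  intro A G
  have h₁ : ∀ e, update w (.inr s) e ∈ A ↔ w ∈ A := lt_revHitBy_update_inr w
  have h₂ : ∀ e, update w (.inl (T - (s + 1))) e ∈ A ↔ w ∈ A := fun e => by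
    simp only [A, Set.mem_ofPred_eq, revHitBy_update_inl]
  by_cases hw : w ∈ A
  · simp only [Set.indicator_of_mem ((h₁ _).mpr hw), Set.indicator_of_mem ((h₂ _).mpr hw), G]
    exact_mod_cast interpGap_switch hD hs x w hw
  · simp only [Set.indicator_of_notMem (mt (h₁ _).mp hw),
      Set.indicator_of_notMem (mt (h₂ _).mp hw)]

lemma integral_interpGap_succ {P : Measure Ω} [IsProbabilityMeasure P] {ξ η : ℕ → Ω → ℤ}
    (h : IndepSSRWIncrements P ξ η) (hD : IsRootCont D) (hs : s < T) (x : ℤ) :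
    ∫ ω, (interpGap D T y ξ η (s + 1) x ω : ℝ) ∂P = ∫ ω, (interpGap D T y ξ η s x ω : ℝ) ∂P := by
  classical
  obtain ⟨hξm, hηm, hξf, hηf, hind⟩ := h
  have hW : ∀ k, Measurable (Sum.elim ξ η k) := Sum.rec hξm hηm
  have hfair : ∀ k, FairSign P (Sum.elim ξ η k) := Sum.rec hξf hηf
  set A : Set (ℕ ⊕ ℕ → ℤ) := {w | s < revHitBy D (walk rightIncr y) T w}
  have hA : DependsOn (· ∈ A) ((range T).disjSum (range T)) := fun w w' h => by
    simp only [A, Set.mem_ofPred_eq, dependsOn_revHitBy h]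
  set G : ℕ → (ℕ ⊕ ℕ → ℤ) → ℝ := fun t w => interpGap D T y leftIncr rightIncr t x w
  have hint : ∀ B : Set (ℕ ⊕ ℕ → ℤ), DependsOn (· ∈ B) ((range T).disjSum (range T)) → ∀ t,
      Integrable (fun ω => B.indicator (G t) (Sum.elim ξ η · ω)) P :=
    fun B hB t => integrable_comp_of_dependsOn hW (FairSign.ae_abs_le_one hW hfair)
      (dependsOn_indicator_interpGap hB t x) fun _ => abs_indicator_interpGap_le B t x
  have hsplit : ∀ t, ∫ ω, (interpGap D T y ξ η t x ω : ℝ) ∂P =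
      ∫ ω, A.indicator (G t) (Sum.elim ξ η · ω) ∂P +
        ∫ ω, Aᶜ.indicator (G t) (Sum.elim ξ η · ω) ∂P :=
    fun t => by
      rw [← integral_add (hint A hA t) (hint Aᶜ (fun w w' h => by simp [hA h]) t)]
      simp only [Set.indicator_self_add_compl_apply]
      rfl
  have hoff : Aᶜ.indicator (G (s + 1)) = Aᶜ.indicator (G s) :=
    Set.indicator_congr fun w hw => by
      simp only [G, interpGap_succ_of_revHitBy_le (not_lt.mp hw)]
  rw [hsplit, hsplit, hoff]
  congr 1
  refine integral_eq_of_sum_update_eq hW hfair hind (dependsOn_indicator_interpGap hA _ x)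
    (dependsOn_indicator_interpGap hA _ x) (fun _ => abs_indicator_interpGap_le A _ x)
    (fun _ => abs_indicator_interpGap_le A _ x) (k := .inr s) (k' := .inl (T - (s + 1)))
    (indicator_interpGap_switch hD hs x)

lemma integrable_interpGap {P : Measure Ω} [IsProbabilityMeasure P] {ξ η : ℕ → Ω → ℤ}
    (h : IndepSSRWIncrements P ξ η) {lam : Measure ℤ} [IsFiniteMeasure lam]
    (hlam : FiniteFirstMoment lam) (t : ℕ) :
    Integrable (fun p : ℤ × Ω => (interpGap D T y ξ η t p.1 p.2 : ℝ)) (lam.prod P) := by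
  obtain ⟨hξm, hηm, hξf, hηf, -⟩ := h
  have hW : ∀ k, Measurable (Sum.elim ξ η k) := Sum.rec hξm hηm
  have hmeas : Measurable fun p : ℤ × Ω => (interpGap D T y ξ η t p.1 p.2 : ℝ) :=
    measurable_from_prod_countable_right fun x => by
      show Measurable fun ω => (interpGap D T y leftIncr rightIncr t x (Sum.elim ξ η · ω) : ℝ)
      exact (DependsOn.measurable fun _ _ h =>
        congrArg ((↑) : ℤ → ℝ) (dependsOn_interpGap x h)).comp
          (measurable_pi_lambda (fun ω k => Sum.elim ξ η k ω) hW)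
  have hbound : ∀ᵐ p ∂(lam.prod P), ‖(interpGap D T y ξ η t p.1 p.2 : ℝ)‖ ≤
      |(p.1 : ℝ)| + (|(y : ℝ)| + 2 * T) :=
    Measure.quasiMeasurePreserving_snd.ae (FairSign.ae_abs_le_one hW (Sum.rec hξf hηf))
      |>.mono fun p hp => by
        have := abs_interpGap_le (D := D) (T := T) (y := y) (s := t) (ξ := ξ) (η := η) p.1
          (fun i _ => hp (.inl i)) fun j _ => hp (.inr j)
        rw [Real.norm_eq_abs, ← add_assoc]
        exact_mod_cast this
  exact (hlam.abs.comp_fst P |>.add (integrable_const _)).mono' hmeas.aestronglyMeasurable hbound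

end Interpolation

theorem interpolating_function_constant_general
    (P : Measure Ω) [IsProbabilityMeasure P] (ξ η : ℕ → Ω → ℤ)
    (h : IndepSSRWIncrements P ξ η)
    (D : Set (ℕ × ℤ)) (hD : IsRootCont D)
    (lam : Measure ℤ) [IsProbabilityMeasure lam] (hlam : FiniteFirstMoment lam)
    (T : ℕ) (y : ℤ)
    (F : ℕ → ℝ)
    (hF : ∀ s, F s = ∫ p : ℤ × Ω,
      ((|walk ξ p.1
          (hitBy D (walk ξ p.1) (T - min (revHitBy D (walk η y) T p.2) s) p.2) p.2
        - walk η y (min (revHitBy D (walk η y) T p.2) s) p.2| : ℤ) : ℝ) ∂(lam.prod P)) :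
    ∀ s, s ≤ T → F s = F 0 := by
  have hF' : ∀ s, F s = ∫ p : ℤ × Ω, (interpGap D T y ξ η s p.1 p.2 : ℝ) ∂(lam.prod P) := hF
  have hstep : ∀ s < T, F (s + 1) = F s := fun s hs => by
    rw [hF', hF', integral_prod _ (integrable_interpGap h hlam _),
      integral_prod _ (integrable_interpGap h hlam _)]
    exact integral_congr_ae (.of_forall fun x => integral_interpGap_succ h hD hs x)
  intro s hs
  induction s with
  | zero => rfl
  | succ s ih => rw [hstep s hs, ih (by omega)]

/-- the interpolating function
`F(s) = E^λ_y[|X_{σ(τ*∧s)} − Y_{τ*∧s}|]`, with `σ(τ) = ρ^{Root} ∧ (T − τ)` and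
`τ* = inf{t : (T−t, Y_t) ∉ D} ∧ T`, is constant on `{0, …, T}`. -/
theorem interpolating_function_constant
    (P : Measure Ω) [IsProbabilityMeasure P] (ξ η : ℕ → Ω → ℤ)
    (h : IndepSSRWIncrements P ξ η)
    (D : Set (ℕ × ℤ)) (hD : IsRootCont D)
    (lam : Measure ℤ) [IsProbabilityMeasure lam] (hlam : FiniteFirstMoment lam)
    (T : ℕ) (y : ℤ)
    (hUI : UniformIntegrable
      (fun (t : ℕ) (p : ℤ × Ω) => ((walk ξ p.1 (hitBy D (walk ξ p.1) t p.2) p.2 : ℤ) : ℝ))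
      1 (lam.prod P))
    (F : ℕ → ℝ)
    (hF : ∀ s, F s = ∫ p : ℤ × Ω,
      ((|walk ξ p.1
          (hitBy D (walk ξ p.1) (T - min (revHitBy D (walk η y) T p.2) s) p.2) p.2
        - walk η y (min (revHitBy D (walk η y) T p.2) s) p.2| : ℤ) : ℝ) ∂(lam.prod P)) :
    ∀ s, s ≤ T → F s = F 0 :=
  interpolating_function_constant_general P ξ η h D hD lam hlam T y F hF

end SwitchingIdentities
end
end

section
/- For every {0,…,T}-valued stopping time σ of the natural filtration of X and every {0,…,T}-valued stopping time τ of the natural filtration of Y, the function s ↦ F^τ_σ(s) := E^λ_y[|X_{σ ∧ (T − τ∧s)} − Y_{τ∧s}|], s ∈ {0,…,T}, is nondecreasing. -/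
/-!
Passing from `s` to `s + 1` changes nothing on `{τ ≤ s}`. On `{τ > s}`, with `n = T - s - 1` and
`a = X_{σ∧n} − Y_s`, the integrands at times `s` and `s + 1` are `|a + 1_{σ>n} ξ_n|` and
`|a − η_s|`. Here `a` and `{σ > n}` are measurable for the σ-algebra of all other increments,
which is independent of the fair signs `ξ_n` and `η_s`. Averaging over them, on `{σ > n}` both
sides become `(|a − 1| + |a + 1|) / 2`, and off it the left side is
`|a| ≤ (|a − 1| + |a + 1|) / 2`. Monotonicity follows step by step, after Tonelli in the
starting point `X_0 ∼ λ`.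
-/

open MeasureTheory ProbabilityTheory

noncomputable section

open scoped ENNReal

-- Reopened without the ambient `[MeasurableSpace Ω]`, so that lemmas can also be stated for a
-- sub-σ-algebra.
namespace SwitchingIdentities

section Measurability

variable {Ω β : Type*} [m : MeasurableSpace Ω] [MeasurableSpace β]

theorem measurable_eval_nat {Z : ℕ → Ω → β} {N : Ω → ℕ}
    (hZ : ∀ i, Measurable (Z i)) (hN : Measurable N) : Measurable fun ω => Z (N ω) ω :=
  (measurable_from_prod_countable_right (f := fun p : ℕ × Ω => Z p.1 p.2) hZ).comp
    (hN.prodMk measurable_id)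

theorem measurable_walk {ξ : ℕ → Ω → ℤ} (x : ℤ) {t : ℕ}
    (hξ : ∀ i < t, Measurable (ξ i)) : Measurable (walk ξ x t) :=
  (Finset.measurable_sum _ fun i hi => hξ i (Finset.mem_range.1 hi)).const_add x

theorem IsNatStopping.measurableSet_le {Z : ℕ → Ω → β} {τ : Ω → ℕ} (hτ : IsNatStopping Z τ)
    {n : ℕ} (hZ : ∀ i ≤ n, Measurable (Z i)) : MeasurableSet {ω | τ ω ≤ n} := by
  obtain ⟨B, hB, hpre⟩ := hτ n
  rw [← hpre]
  exact measurable_pi_lambda _ (fun i : Fin (n + 1) => hZ i (by omega)) hB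

theorem IsNatStopping.measurable {Z : ℕ → Ω → β} {τ : Ω → ℕ} (hτ : IsNatStopping Z τ)
    (hZ : ∀ i, Measurable (Z i)) : Measurable τ :=
  measurable_of_Iic fun _ => hτ.measurableSet_le fun i _ => hZ i

theorem IsNatStopping.measurable_min {Z : ℕ → Ω → β} {τ : Ω → ℕ} (hτ : IsNatStopping Z τ)
    {n : ℕ} (hZ : ∀ i ≤ n, Measurable (Z i)) : Measurable fun ω => min (τ ω) n := by
  refine measurable_of_Iic fun k => ?_
  rcases lt_or_ge k n with hk | hk
  · convert hτ.measurableSet_le (n := k) fun i hi => hZ i (by omega) using 1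
    ext ω
    simp [hk.not_ge]
  · convert MeasurableSet.univ
    ext ω
    simp [hk]

end Measurability

theorem IsNatStopping.comp {Ω Ω' β : Type*} [MeasurableSpace β] {Z : ℕ → Ω → β} {τ : Ω → ℕ}
    (hτ : IsNatStopping Z τ) (f : Ω' → Ω) : IsNatStopping (fun i => Z i ∘ f) (τ ∘ f) :=
  fun n => by
    obtain ⟨B, hB, hpre⟩ := hτ n
    exact ⟨B, hB, congrArg (f ⁻¹' ·) hpre⟩

theorem walk_add_one {Ω : Type*} (ξ : ℕ → Ω → ℤ) (x : ℤ) (t : ℕ) (ω : Ω) :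
    walk ξ x (t + 1) ω = walk ξ x t ω + ξ t ω := by
  simp [walk, Finset.sum_range_succ, add_assoc]

theorem walk_min_add_one {Ω : Type*} (ξ : ℕ → Ω → ℤ) (x : ℤ) (N t : ℕ) (ω : Ω) :
    walk ξ x (min N (t + 1)) ω = walk ξ x (min N t) ω + if t < N then ξ t ω else 0 := by
  split_ifs with h
  · rw [min_eq_right h, min_eq_right h.le, walk_add_one]
  · rw [min_eq_left (by omega), min_eq_left (by omega), add_zero]

theorem norm_walk_le {Ω : Type*} (ξ : ℕ → Ω → ℤ) (x : ℤ) {t T : ℕ} (ht : t ≤ T) (ω : Ω) :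
    ‖walk ξ x t ω‖ ≤ ‖x‖ + ∑ i ∈ Finset.range T, ‖ξ i ω‖ :=
  (norm_add_le _ _).trans <| add_le_add_right ((norm_sum_le _ _).trans <|
    Finset.sum_le_sum_of_subset_of_nonneg (Finset.range_mono ht) fun _ _ _ => norm_nonneg _) _

theorem Int.enorm_eq_natAbs (a : ℤ) : ‖a‖ₑ = a.natAbs := by
  rw [← Int.enorm_natCast, Int.natCast_natAbs, ← ofReal_norm, ← ofReal_norm, norm_abs_eq_norm]

theorem Int.two_mul_enorm_le (a : ℤ) : 2 * ‖a‖ₑ ≤ ‖a - 1‖ₑ + ‖a + 1‖ₑ := by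
  simp only [Int.enorm_eq_natAbs]
  exact_mod_cast (by omega : 2 * a.natAbs ≤ (a - 1).natAbs + (a + 1).natAbs)

section FairSign

variable {Ω : Type*} [MeasurableSpace Ω] {P : Measure Ω} [IsProbabilityMeasure P] {v : Ω → ℤ}

theorem FairSign.ae_eq_one_or_eq_neg_one (hv : FairSign P v) (hvm : Measurable v) :
    ∀ᵐ ω ∂P, v ω = 1 ∨ v ω = -1 := by
  have hdisj : Disjoint {ω | v ω = 1} {ω | v ω = -1} :=
    Set.disjoint_left.2 fun ω h1 h2 => by simp_all
  have hunion : P ({ω | v ω = 1} ∪ {ω | v ω = -1}) = 1 := by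
    rw [measure_union hdisj (hvm (measurableSet_singleton _)), hv.1, hv.2, ENNReal.add_halves]
  refine (ae_iff_measure_eq ?_).2 (by rw [Set.ofPred_or, hunion, measure_univ])
  exact ((hvm (measurableSet_singleton _)).union
    (hvm (measurableSet_singleton _))).nullMeasurableSet

theorem FairSign.integrable (hv : FairSign P v) (hvm : Measurable v) : Integrable v P :=
  Integrable.of_bound hvm.aestronglyMeasurable 1 <|
    (hv.ae_eq_one_or_eq_neg_one hvm).mono fun ω h => by rcases h with h | h <;> simp [h]

end FairSign

theorem FairSign.lintegral_comp {Ω : Type*} {G mΩ : MeasurableSpace Ω} (hG : G ≤ mΩ)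
    {P : Measure Ω} [IsProbabilityMeasure P] {v : Ω → ℤ} (hv : FairSign P v)
    (hvm : Measurable v) (hind : Indep G (MeasurableSpace.comap v inferInstance) P)
    {Φ : Ω → ℤ → ℝ≥0∞} (hΦ : ∀ k, Measurable[G] (Φ · k)) :
    ∫⁻ ω, Φ ω (v ω) ∂P = ∫⁻ ω, (Φ ω 1 + Φ ω (-1)) / 2 ∂P := by
  have hsplit : ∀ᵐ ω ∂P, Φ ω (v ω) =
      Φ ω 1 * {ω | v ω = 1}.indicator 1 ω + Φ ω (-1) * {ω | v ω = -1}.indicator 1 ω := by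
    filter_upwards [hv.ae_eq_one_or_eq_neg_one hvm] with ω h
    rcases h with h | h <;> simp [Set.indicator, h]
  have hfactor : ∀ k, ∫⁻ ω, Φ ω k * {ω | v ω = k}.indicator 1 ω ∂P =
      (∫⁻ ω, Φ ω k ∂P) * P {ω | v ω = k} := fun k => by
    have hk : Measurable[MeasurableSpace.comap v inferInstance]
        ({ω | v ω = k}.indicator (1 : Ω → ℝ≥0∞)) :=
      measurable_const.indicator ⟨{k}, measurableSet_singleton k, rfl⟩
    rw [lintegral_mul_eq_lintegral_mul_lintegral_of_independent_measurableSpace hG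
      hvm.comap_le hind (hΦ k) hk,
      lintegral_indicator_one (s := {ω | v ω = k}) (hvm (measurableSet_singleton k))]
  have hΦm : ∀ k, Measurable (Φ · k) := fun k => (hΦ k).mono hG le_rfl
  calc ∫⁻ ω, Φ ω (v ω) ∂P
      = ∫⁻ ω, Φ ω 1 * {ω | v ω = 1}.indicator 1 ω
          + Φ ω (-1) * {ω | v ω = -1}.indicator 1 ω ∂P := lintegral_congr_ae hsplit
    _ = (∫⁻ ω, Φ ω 1 ∂P) * P {ω | v ω = 1} + (∫⁻ ω, Φ ω (-1) ∂P) * P {ω | v ω = -1} := by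
      have hm : Measurable fun ω => Φ ω 1 * {ω | v ω = 1}.indicator 1 ω :=
        (hΦm 1).mul (measurable_one.indicator (hvm (measurableSet_singleton 1)))
      rw [lintegral_add_left hm, hfactor, hfactor]
    _ = ∫⁻ ω, (Φ ω 1 + Φ ω (-1)) / 2 ∂P := by
      simp_rw [div_eq_mul_inv]
      rw [lintegral_mul_const' _ _ (by simp), lintegral_add_left (hΦm 1), hv.1, hv.2, one_div]
      ring

theorem iIndepFun.indep_biSup_compl_comap {Ω ι β : Type*} {mΩ : MeasurableSpace Ω}
    [mβ : MeasurableSpace β] {P : Measure Ω} [IsProbabilityMeasure P] {X : ι → Ω → β}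
    (hX : ∀ i, Measurable (X i)) (h : iIndepFun X P) {S : Set ι} {k : ι} (hk : k ∈ S) :
    Indep (⨆ i ∈ Sᶜ, mβ.comap (X i)) (mβ.comap (X k)) P := by
  have hS := indep_biSup_compl (fun i => (hX i).comap_le) h Sᶜ
  rw [compl_compl] at hS
  exact indep_of_indep_of_le_right hS (le_iSup₂ (f := fun i _ => mβ.comap (X i)) k hk)

theorem setLIntegral_enorm_add_indicator_le {Ω : Type*} {G mΩ : MeasurableSpace Ω}
    (hG : G ≤ mΩ) {P : Measure Ω} [IsProbabilityMeasure P] {u v : Ω → ℤ}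
    (hu : FairSign P u) (hum : Measurable u)
    (hIu : Indep G (MeasurableSpace.comap u inferInstance) P)
    (hv : FairSign P v) (hvm : Measurable v)
    (hIv : Indep G (MeasurableSpace.comap v inferInstance) P)
    {a : Ω → ℤ} (ha : Measurable[G] a) {E C : Set Ω} (hE : MeasurableSet[G] E)
    (hC : MeasurableSet[G] C) :
    ∫⁻ ω in E, ‖a ω + C.indicator u ω‖ₑ ∂P ≤ ∫⁻ ω in E, ‖a ω - v ω‖ₑ ∂P := by
  set Ψ : Ω → ℤ → ℝ≥0∞ := fun ω k =>
    E.indicator (fun ω => ‖a ω + C.indicator (fun _ => k) ω‖ₑ) ω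
  set Φ : Ω → ℤ → ℝ≥0∞ := fun ω k => E.indicator (fun ω => ‖a ω - k‖ₑ) ω
  have hΨ : ∀ k, Measurable[G] (Ψ · k) := fun k =>
    ((Measurable.of_discrete (f := fun z : ℤ => ‖z‖ₑ)).comp
      (ha.add (measurable_const.indicator hC))).indicator hE
  have hΦ : ∀ k, Measurable[G] (Φ · k) := fun k =>
    ((Measurable.of_discrete (f := fun z : ℤ => ‖z‖ₑ)).comp (ha.sub measurable_const)).indicator hE
  calc ∫⁻ ω in E, ‖a ω + C.indicator u ω‖ₑ ∂P = ∫⁻ ω, Ψ ω (u ω) ∂P := by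
        rw [← lintegral_indicator (hG _ hE)]; rfl
    _ = ∫⁻ ω, (Ψ ω 1 + Ψ ω (-1)) / 2 ∂P := hu.lintegral_comp hG hum hIu hΨ
    _ ≤ ∫⁻ ω, (Φ ω 1 + Φ ω (-1)) / 2 ∂P := by
        refine lintegral_mono fun ω => ENNReal.div_le_div_right ?_ 2
        by_cases hω : ω ∈ E
        · by_cases hc : ω ∈ C
          · simp [Ψ, Φ, hω, hc, sub_eq_add_neg, add_comm]
          · simpa [Ψ, Φ, hω, hc, two_mul] using Int.two_mul_enorm_le (a ω)
        · simp [Ψ, Φ, hω]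
    _ = ∫⁻ ω, Φ ω (v ω) ∂P := (hv.lintegral_comp hG hvm hIv hΦ).symm
    _ = ∫⁻ ω in E, ‖a ω - v ω‖ₑ ∂P := by
        rw [← lintegral_indicator (hG _ hE)]; rfl

def interpolatedGap {Ω : Type*} (X Y : ℕ → Ω → ℤ) (σ τ : Ω → ℕ) (T s : ℕ) (ω : Ω) : ℤ :=
  X (min (σ ω) (T - min (τ ω) s)) ω - Y (min (τ ω) s) ω

section Gap

variable {Ω : Type*} {ξ η : ℕ → Ω → ℤ} {x y : ℤ} {σ τ : Ω → ℕ} {T s : ℕ}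

theorem measurable_interpolatedGap [MeasurableSpace Ω] {X Y : ℕ → Ω → ℤ}
    (hX : ∀ i, Measurable (X i)) (hY : ∀ i, Measurable (Y i)) (hσ : Measurable σ) (hτ : Measurable τ) :
    Measurable (interpolatedGap X Y σ τ T s) :=
  (measurable_eval_nat hX ((Measurable.of_discrete (f := fun q : ℕ × ℕ =>
    min q.1 (T - min q.2 s))).comp (hσ.prodMk hτ))).sub
    (measurable_eval_nat hY ((Measurable.of_discrete (f := fun t : ℕ => min t s)).comp hτ))

theorem norm_interpolatedGap_walk_le (hs : s ≤ T) (ω : Ω) :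
    ‖interpolatedGap (walk ξ x) (walk η y) σ τ T s ω‖ ≤
      ‖x‖ + ‖y‖ + ∑ i ∈ Finset.range T, (‖ξ i ω‖ + ‖η i ω‖) := by
  have hX := norm_walk_le ξ x ((min_le_right (σ ω) (T - min (τ ω) s)).trans (Nat.sub_le T _)) ω
  have hY := norm_walk_le η y ((min_le_right (τ ω) s).trans hs) ω
  rw [Finset.sum_add_distrib]
  exact (norm_sub_le _ _).trans (by linarith)

theorem lintegral_enorm_interpolatedGap_walk_le_succ_of_indep {G mΩ : MeasurableSpace Ω}
    (hG : G ≤ mΩ) {P : Measure Ω} [IsProbabilityMeasure P] {n : ℕ}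
    (hξG : ∀ i < n, Measurable[G] (ξ i)) (hηG : ∀ j < s, Measurable[G] (η j))
    (hξf : FairSign P (ξ n)) (hξm : Measurable (ξ n))
    (hIξ : Indep G (MeasurableSpace.comap (ξ n) inferInstance) P)
    (hηf : FairSign P (η s)) (hηm : Measurable (η s))
    (hIη : Indep G (MeasurableSpace.comap (η s) inferInstance) P)
    (hσ : IsNatStopping (walk ξ x) σ) (hτ : IsNatStopping (walk η y) τ) :
    ∫⁻ ω, ‖interpolatedGap (walk ξ x) (walk η y) σ τ (s + n + 1) s ω‖ₑ ∂P ≤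
      ∫⁻ ω, ‖interpolatedGap (walk ξ x) (walk η y) σ τ (s + n + 1) (s + 1) ω‖ₑ ∂P := by
  have hwξ : ∀ t ≤ n, Measurable[G] (walk ξ x t) := fun t ht =>
    measurable_walk (m := G) x fun i hi => hξG i (by omega)
  have hwη : ∀ t ≤ s, Measurable[G] (walk η y t) := fun t ht =>
    measurable_walk (m := G) y fun i hi => hηG i (by omega)
  set E : Set Ω := {ω | τ ω ≤ s}ᶜ
  set C : Set Ω := {ω | σ ω ≤ n}ᶜ
  set a : Ω → ℤ := fun ω => walk ξ x (min (σ ω) n) ω - walk η y s ω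
  have hE : MeasurableSet[G] E := (hτ.measurableSet_le (m := G) hwη).compl
  have hC : MeasurableSet[G] C := (hσ.measurableSet_le (m := G) hwξ).compl
  have ha : Measurable[G] a := by
    refine Measurable.sub ?_ (hwη s le_rfl)
    simpa only [min_assoc, min_self] using measurable_eval_nat (m := G)
      (Z := fun i => walk ξ x (min i n)) (fun i => hwξ _ (min_le_right _ _))
      (hσ.measurable_min (m := G) hwξ)
  have hgap : ∀ ω ∈ E, interpolatedGap (walk ξ x) (walk η y) σ τ (s + n + 1) s ω =
      a ω + C.indicator (ξ n) ω := fun ω hω => by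
    simp only [E, Set.mem_compl_iff, Set.mem_ofPred_eq, not_le] at hω
    simp only [interpolatedGap, a, C, min_eq_right hω.le, show s + n + 1 - s = n + 1 by omega,
      walk_min_add_one, Set.indicator, Set.mem_compl_iff, Set.mem_ofPred_eq, not_le]
    ring
  have hgap_succ : ∀ ω ∈ E, interpolatedGap (walk ξ x) (walk η y) σ τ (s + n + 1) (s + 1) ω =
      a ω - η s ω := fun ω hω => by
    simp only [E, Set.mem_compl_iff, Set.mem_ofPred_eq, not_le] at hω
    simp only [interpolatedGap, a, min_eq_right (Nat.succ_le_of_lt hω),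
      show s + n + 1 - (s + 1) = n by omega, walk_add_one]
    ring
  have hgap_stopped : ∀ ω ∈ Eᶜ,
      interpolatedGap (walk ξ x) (walk η y) σ τ (s + n + 1) (s + 1) ω =
        interpolatedGap (walk ξ x) (walk η y) σ τ (s + n + 1) s ω := fun ω hω => by
    simp only [E, compl_compl, Set.mem_ofPred_eq] at hω
    simp only [interpolatedGap, min_eq_left hω, min_eq_left (hω.trans s.le_succ)]
  have hE' : MeasurableSet E := hG _ hE
  rw [← lintegral_add_compl (μ := P) _ hE', ← lintegral_add_compl (μ := P) _ hE']
  gcongr ?_ + ?_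
  · refine ((setLIntegral_congr_fun hE' fun ω hω => ?_).trans_le
      (setLIntegral_enorm_add_indicator_le hG hξf hξm hIξ hηf hηm hIη ha hE hC)).trans_eq
      (setLIntegral_congr_fun hE' fun ω hω => ?_)
    · rw [hgap ω hω]
    · rw [hgap_succ ω hω]
  · exact (setLIntegral_congr_fun hE'.compl fun ω hω => by rw [hgap_stopped ω hω]).ge

theorem lintegral_enorm_interpolatedGap_walk_le_succ [MeasurableSpace Ω] {P : Measure Ω}
    [IsProbabilityMeasure P]
    (h : IndepSSRWIncrements P ξ η) (hσ : IsNatStopping (walk ξ x) σ)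
    (hτ : IsNatStopping (walk η y) τ) (hs : s < T) :
    ∫⁻ ω, ‖interpolatedGap (walk ξ x) (walk η y) σ τ T s ω‖ₑ ∂P ≤
      ∫⁻ ω, ‖interpolatedGap (walk ξ x) (walk η y) σ τ T (s + 1) ω‖ₑ ∂P := by
  have hind : iIndepFun (Sum.elim ξ η) P := h.2.2.2.2
  obtain ⟨hξm, hηm, hξf, hηf, -⟩ := h
  obtain ⟨n, rfl⟩ := Nat.exists_eq_add_of_lt hs
  set S : Set (ℕ ⊕ ℕ) := {.inl n, .inr s}
  have hm : ∀ i, Measurable (Sum.elim ξ η i) := fun i => i.rec hξm hηm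
  have hGm : ∀ i ∉ S, Measurable[⨆ j ∈ Sᶜ, MeasurableSpace.comap (Sum.elim ξ η j) inferInstance]
      (Sum.elim ξ η i) := fun i hi =>
    Measurable.of_comap_le (le_iSup₂ (f := fun j (_ : j ∈ Sᶜ) =>
      MeasurableSpace.comap (Sum.elim ξ η j) inferInstance) i hi)
  exact lintegral_enorm_interpolatedGap_walk_le_succ_of_indep
    (iSup₂_le fun i _ => (hm i).comap_le)
    (fun i hi => hGm (.inl i) (by simp [S]; omega))
    (fun j hj => hGm (.inr j) (by simp [S]; omega))
    (hξf n) (hξm n) (iIndepFun.indep_biSup_compl_comap hm hind (k := .inl n) (by simp [S]))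
    (hηf s) (hηm s) (iIndepFun.indep_biSup_compl_comap hm hind (k := .inr s) (by simp [S]))
    hσ hτ

section Product

variable [MeasurableSpace Ω] {σ : ℤ × Ω → ℕ}

theorem measurable_interpolatedGap_walk_prod (hξ : ∀ i, Measurable (ξ i))
    (hη : ∀ i, Measurable (η i)) (hσ : IsNatStopping (fun i (p : ℤ × Ω) => walk ξ p.1 i p.2) σ)
    (hτ : IsNatStopping (walk η y) τ) :
    Measurable fun p : ℤ × Ω =>
      interpolatedGap (walk ξ p.1) (walk η y) (fun ω => σ (p.1, ω)) τ T s p.2 := by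
  have hwξ : ∀ x i, Measurable (walk ξ x i) := fun x i => measurable_walk x fun j _ => hξ j
  have hwη : ∀ i, Measurable (walk η y i) := fun i => measurable_walk y fun j _ => hη j
  exact measurable_from_prod_countable_right fun x => measurable_interpolatedGap (hwξ x) hwη
    ((hσ.comp (x, ·)).measurable (hwξ x)) (hτ.measurable hwη)

theorem integrable_interpolatedGap_walk_prod {P : Measure Ω} [IsProbabilityMeasure P]
    {lam : Measure ℤ} [IsProbabilityMeasure lam] (h : IndepSSRWIncrements P ξ η)
    (hlam : FiniteFirstMoment lam)
    (hσ : IsNatStopping (fun i (p : ℤ × Ω) => walk ξ p.1 i p.2) σ)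
    (hτ : IsNatStopping (walk η y) τ) (hs : s ≤ T) :
    Integrable (fun p : ℤ × Ω =>
      interpolatedGap (walk ξ p.1) (walk η y) (fun ω => σ (p.1, ω)) τ T s p.2) (lam.prod P) := by
  obtain ⟨hξm, hηm, hξf, hηf, -⟩ := h
  have hx : Integrable (fun x : ℤ => ‖x‖) lam := by
    simpa only [Int.norm_cast_real] using hlam.norm
  have hincr : Integrable (fun ω => ∑ i ∈ Finset.range T, (‖ξ i ω‖ + ‖η i ω‖)) P :=
    integrable_finsetSum _ fun i _ =>
      ((hξf i).integrable (hξm i)).norm.add ((hηf i).integrable (hηm i)).norm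
  exact Integrable.mono' (((hx.comp_fst P).add (integrable_const _)).add (hincr.comp_snd lam))
    (measurable_interpolatedGap_walk_prod hξm hηm hσ hτ).aestronglyMeasurable
    (ae_of_all _ fun p => norm_interpolatedGap_walk_le hs p.2)

end Product

end Gap

variable {Ω : Type*} [MeasurableSpace Ω]

theorem general_interpolating_function_monotone_general
    (P : Measure Ω) [IsProbabilityMeasure P] (ξ η : ℕ → Ω → ℤ)
    (h : IndepSSRWIncrements P ξ η)
    (lam : Measure ℤ) [IsProbabilityMeasure lam] (hlam : FiniteFirstMoment lam)
    (T : ℕ) (y : ℤ)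
    (σ : ℤ × Ω → ℕ) (hσ : IsNatStopping (fun i (p : ℤ × Ω) => walk ξ p.1 i p.2) σ)
    (τ : Ω → ℕ) (hτ : IsNatStopping (walk η y) τ)
    (F : ℕ → ℝ)
    (hF : ∀ s, F s = ∫ p : ℤ × Ω,
      ((|walk ξ p.1 (min (σ p) (T - min (τ p.2) s)) p.2
        - walk η y (min (τ p.2) s) p.2| : ℤ) : ℝ) ∂(lam.prod P)) :
    ∀ s₁ s₂, s₁ ≤ s₂ → s₂ ≤ T → F s₁ ≤ F s₂ := by
  set gap : ℕ → ℤ × Ω → ℤ := fun s p =>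
    interpolatedGap (walk ξ p.1) (walk η y) (fun ω => σ (p.1, ω)) τ T s p.2
  have hgap : ∀ s, Measurable (gap s) := fun s =>
    measurable_interpolatedGap_walk_prod h.1 h.2.1 hσ hτ
  have hF_lintegral : ∀ s, F s = (∫⁻ p, ‖gap s p‖ₑ ∂(lam.prod P)).toReal := fun s => by
    rw [hF, ← integral_norm_eq_lintegral_enorm (hgap s).aestronglyMeasurable]
    simp only [gap, interpolatedGap, Int.norm_eq_abs, Int.cast_abs]
  have hstep : ∀ s < T,
      ∫⁻ p, ‖gap s p‖ₑ ∂(lam.prod P) ≤ ∫⁻ p, ‖gap (s + 1) p‖ₑ ∂(lam.prod P) := fun s hs => by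
    rw [lintegral_prod _ (hgap s).enorm.aemeasurable,
      lintegral_prod _ (hgap (s + 1)).enorm.aemeasurable]
    exact lintegral_mono fun x => lintegral_enorm_interpolatedGap_walk_le_succ h (hσ.comp _) hτ hs
  intro s₁ s₂ h12 h2T
  rw [hF_lintegral, hF_lintegral]
  refine ENNReal.toReal_mono
    (integrable_interpolatedGap_walk_prod h hlam hσ hτ h2T).hasFiniteIntegral.ne ?_
  induction s₂, h12 using Nat.le_induction with
  | base => exact le_rfl
  | succ k hk ih => exact (ih (by omega)).trans (hstep k (by omega))

/-- for every `{0,…,T}`-valued stopping time `σ` of the natural filtration of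
`X` (with `X_0 ∼ λ`) and every `{0,…,T}`-valued stopping time `τ` of the natural filtration of
`Y` (with `Y_0 = y`), the function `s ↦ F^τ_σ(s) = E^λ_y[|X_{σ ∧ (T − τ∧s)} − Y_{τ∧s}|]` is
nondecreasing on `{0, …, T}`. -/
theorem general_interpolating_function_monotone
    (P : Measure Ω) [IsProbabilityMeasure P] (ξ η : ℕ → Ω → ℤ)
    (h : IndepSSRWIncrements P ξ η)
    (lam : Measure ℤ) [IsProbabilityMeasure lam] (hlam : FiniteFirstMoment lam)
    (T : ℕ) (y : ℤ)
    (σ : ℤ × Ω → ℕ) (hσ : IsNatStopping (fun i (p : ℤ × Ω) => walk ξ p.1 i p.2) σ)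
    (hσT : ∀ p, σ p ≤ T)
    (τ : Ω → ℕ) (hτ : IsNatStopping (walk η y) τ) (hτT : ∀ ω, τ ω ≤ T)
    (F : ℕ → ℝ)
    (hF : ∀ s, F s = ∫ p : ℤ × Ω,
      ((|walk ξ p.1 (min (σ p) (T - min (τ p.2) s)) p.2
        - walk η y (min (τ p.2) s) p.2| : ℤ) : ℝ) ∂(lam.prod P)) :
    ∀ s₁ s₂, s₁ ≤ s₂ → s₂ ≤ T → F s₁ ≤ F s₂ :=
  general_interpolating_function_monotone_general P ξ η h lam hlam T y σ hσ τ hτ F hF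

end SwitchingIdentities
end
end
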